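/- For a finite group G and integer n ≥ 2, cpₙ(G) = (1/|G|) · Σᵢ cp_{n-1}(Z_G(gᵢ)) / |C(gᵢ)|^{n-2}, where the sum is over representatives g₁,…,g_k of the conjugacy classes of G, C(gᵢ) is the conjugacy class of gᵢ, and Z_G(gᵢ) its centralizer. -/

import Mathlib

open Subgroup

/-- `cp G n` : the probability that a random `n`-tuple of elements of `G` pairwise commutes. -/
noncomputable def cp (G : Type*) [Group G] (n : ℕ) : ℚ :=
  (Nat.card {v : Fin n → G // ∀ i j, Commute (v i) (v j)} : ℚ) / (Nat.card G : ℚ) ^ n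

section Aux

variable {G : Type*} [Group G]

/-- Commuting tuples transfer along a `MulEquiv`. -/
def commTupleEquiv {H K : Type*} [Group H] [Group K] (e : H ≃* K) (m : ℕ) :
    {w : Fin m → H // ∀ i j, Commute (w i) (w j)} ≃
      {w : Fin m → K // ∀ i j, Commute (w i) (w j)} where
  toFun w := ⟨fun i => e (w.1 i), fun i j => (w.2 i j).map e.toMonoidHom⟩
  invFun w := ⟨fun i => e.symm (w.1 i), fun i j => (w.2 i j).map e.symm.toMonoidHom⟩
  left_inv w := by ext i; simp
  right_inv w := by ext i; simp

/-- Conjugation gives an isomorphism of centralizers. -/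
def conjCentEquiv (c a : G) :
    centralizer ({a} : Set G) ≃* centralizer ({c * a * c⁻¹} : Set G) where
  toFun x := ⟨c * x * c⁻¹, by
    rw [mem_centralizer_iff]
    intro h hh
    rw [Set.mem_singleton_iff] at hh
    rw [hh]
    have hx : a * (x : G) = x * a := x.2 a rfl
    calc (c * a * c⁻¹) * (c * (x : G) * c⁻¹) = c * (a * (x : G)) * c⁻¹ := by group
      _ = c * ((x : G) * a) * c⁻¹ := by rw [hx]
      _ = (c * (x : G) * c⁻¹) * (c * a * c⁻¹) := by group⟩
  invFun y := ⟨c⁻¹ * y * c, by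
    rw [mem_centralizer_iff]
    intro h hh
    rw [Set.mem_singleton_iff] at hh
    rw [hh]
    have hy : (c * a * c⁻¹) * (y : G) = y * (c * a * c⁻¹) := y.2 _ rfl
    calc a * (c⁻¹ * (y : G) * c) = c⁻¹ * ((c * a * c⁻¹) * (y : G)) * c := by group
      _ = c⁻¹ * ((y : G) * (c * a * c⁻¹)) * c := by rw [hy]
      _ = (c⁻¹ * (y : G) * c) * a := by group⟩
  left_inv x := by ext; simp [mul_assoc]
  right_inv y := by ext; simp [mul_assoc]
  map_mul' x y := by ext; simp [mul_assoc]

lemma card_commTuple_conj {a b : G} (h : IsConj a b) (m : ℕ) :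
    Nat.card {w : Fin m → centralizer ({a} : Set G) // ∀ i j, Commute (w i) (w j)} =
      Nat.card {w : Fin m → centralizer ({b} : Set G) // ∀ i j, Commute (w i) (w j)} := by
  rw [isConj_iff] at h
  obtain ⟨c, rfl⟩ := h
  exact Nat.card_congr (commTupleEquiv (conjCentEquiv c a) m)

/-- The fiber over `g` of the "first coordinate" map on commuting tuples. -/
def fiberEquiv (m : ℕ) (g : G) :
    {v : {v : Fin (m + 1) → G // ∀ i j, Commute (v i) (v j)} // v.1 0 = g} ≃
      {w : Fin m → centralizer ({g} : Set G) // ∀ i j, Commute (w i) (w j)} where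
  toFun p := ⟨fun i => ⟨p.1.1 i.succ, by
      rw [mem_centralizer_iff]
      rintro h rfl
      have := p.1.2 0 i.succ
      rwa [p.2] at this⟩,
    fun i j => Subtype.ext (p.1.2 i.succ j.succ)⟩
  invFun q := ⟨⟨Fin.cons g (fun i => (q.1 i : G)), by
      intro i j
      refine Fin.cases ?_ (fun i' => ?_) i <;>
        [skip; skip] <;> refine Fin.cases ?_ (fun j' => ?_) j
      · simp
      · simpa [Commute, SemiconjBy] using (q.1 j').2 g rfl
      · simpa [Commute, SemiconjBy] using ((q.1 i').2 g rfl).symm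
      · simpa [Commute, SemiconjBy] using congrArg Subtype.val (q.2 i' j')⟩, by simp⟩
  left_inv p := by
    apply Subtype.ext; apply Subtype.ext; funext i
    refine Fin.cases ?_ (fun i' => ?_) i
    · simp [p.2]
    · simp
  right_inv q := by
    apply Subtype.ext; funext i; apply Subtype.ext; simp

lemma card_comm_succ [Fintype G] (m : ℕ) :
    Nat.card {v : Fin (m + 1) → G // ∀ i j, Commute (v i) (v j)} =
      ∑ g : G, Nat.card
        {w : Fin m → centralizer ({g} : Set G) // ∀ i j, Commute (w i) (w j)} := by
  classical
  rw [← Nat.card_congr (Equiv.sigmaFiberEquiv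
    (fun v : {v : Fin (m + 1) → G // ∀ i j, Commute (v i) (v j)} => v.1 0))]
  rw [Nat.card_eq_fintype_card, Fintype.card_sigma]
  refine Finset.sum_congr rfl fun g _ => ?_
  rw [← Nat.card_eq_fintype_card]
  exact Nat.card_congr (fiberEquiv m g)

end Aux

set_option maxHeartbeats 1000000 in
theorem lescot_recursion (G : Type*) [Group G] [Fintype G] (n : ℕ) (hn : 2 ≤ n)
    (k : ℕ) (g : Fin k → G)
    (hg : Function.Bijective (fun i => ConjClasses.mk (g i) : Fin k → ConjClasses G)) :
    cp G n = (1 / (Nat.card G : ℚ)) *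
      ∑ i : Fin k, cp (Subgroup.centralizer {g i}) (n - 1) /
        (Nat.card {x : G // IsConj (g i) x} : ℚ) ^ (n - 2) := by
  classical
  obtain ⟨m, rfl⟩ : ∃ m, n = m + 2 := ⟨n - 2, by omega⟩
  have h1 : m + 2 - 1 = m + 1 := rfl
  have h2 : m + 2 - 2 = m := rfl
  rw [h1, h2]
  letI : Fintype (ConjClasses G) := Fintype.ofFinite _
  set N : G → ℕ := fun a =>
    Nat.card {w : Fin (m + 1) → centralizer ({a} : Set G) // ∀ i j, Commute (w i) (w j)}
    with hN
  set C : Fin k → ℕ := fun i => Nat.card {x : G // IsConj (g i) x} with hC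
  -- Step 1 : counting
  have hcount : Nat.card {v : Fin (m + 2) → G // ∀ i j, Commute (v i) (v j)} =
      ∑ i : Fin k, C i * N (g i) := by
    rw [card_comm_succ (m + 1)]
    rw [← Finset.sum_fiberwise_of_maps_to
      (g := fun x : G => ConjClasses.mk x) (t := (Finset.univ : Finset (ConjClasses G)))
      (fun x _ => Finset.mem_univ _) N]
    refine (Fintype.sum_bijective _ hg (fun i => C i * N (g i))
      (fun c => ∑ x ∈ Finset.univ.filter (fun x => ConjClasses.mk x = c), N x)
      fun i => ?_).symm
    have hconst : ∀ x ∈ Finset.univ.filter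
        (fun x => ConjClasses.mk x = ConjClasses.mk (g i)), N x = N (g i) := by
      intro x hx
      have hx' : IsConj (g i) x :=
        (ConjClasses.mk_eq_mk_iff_isConj.mp (Finset.mem_filter.mp hx).2).symm
      exact (card_commTuple_conj hx' (m + 1)).symm
    rw [Finset.sum_congr rfl hconst, Finset.sum_const, smul_eq_mul]
    congr 1
    have : C i = Fintype.card {x : G // ConjClasses.mk x = ConjClasses.mk (g i)} := by
      show Nat.card {x : G // IsConj (g i) x} = _
      rw [Nat.card_eq_fintype_card]
      refine Fintype.card_congr (Equiv.subtypeEquivRight fun x => ?_)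
      rw [ConjClasses.mk_eq_mk_iff_isConj, isConj_comm]
    rw [this, Fintype.card_subtype]
  -- Step 2 : orbit-stabilizer
  have horb : ∀ i : Fin k,
      Nat.card (centralizer ({g i} : Set G)) * C i = Nat.card G := by
    intro i
    have key := MulAction.card_orbit_mul_card_stabilizer_eq_card_group (ConjAct G) (g i)
    have hC' : C i = Fintype.card (MulAction.orbit (ConjAct G) (g i)) := by
      rw [hC, ← Nat.card_eq_fintype_card]
      refine Nat.card_congr (Equiv.subtypeEquivRight fun x => ?_)
      rw [ConjAct.mem_orbit_conjAct]
      exact isConj_comm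
    have hcent : Nat.card (centralizer ({g i} : Set G)) =
        Fintype.card (MulAction.stabilizer (ConjAct G) (g i)) :=
      (Subgroup.nat_card_centralizer_nat_card_stabilizer (g i)).trans
        Nat.card_eq_fintype_card
    have hGG : Fintype.card (ConjAct G) = Nat.card G := by
      rw [← Nat.card_eq_fintype_card]
      exact Nat.card_congr ConjAct.ofConjAct.toEquiv
    rw [hC', hcent, mul_comm, key, hGG]
  -- positivity facts
  have hZpos : ∀ i : Fin k,
      ((Nat.card (centralizer ({g i} : Set G)) : ℚ)) ≠ 0 := by
    intro i
    have : (0 : ℚ) < Nat.card (centralizer ({g i} : Set G)) := by exact_mod_cast Nat.card_pos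
    exact this.ne'
  have hCpos : ∀ i : Fin k, (C i : ℚ) ≠ 0 := by
    intro i
    have : Nonempty {x : G // IsConj (g i) x} := ⟨⟨g i, IsConj.refl _⟩⟩
    have : (0 : ℚ) < C i := by rw [hC]; exact_mod_cast Nat.card_pos
    exact this.ne'
  -- Step 3 : arithmetic
  rw [cp, hcount, Finset.mul_sum]
  push_cast
  rw [Finset.sum_div]
  refine Finset.sum_congr rfl fun i _ => ?_
  rw [cp]
  have hZC : ((Nat.card (centralizer ({g i} : Set G)) : ℚ)) * C i = Nat.card G := by
    exact_mod_cast congrArg (Nat.cast (R := ℚ)) (horb i)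
  rw [← hZC]
  have hZ := hZpos i
  have hc := hCpos i
  have key : ∀ q z t : ℚ, q ≠ 0 → z ≠ 0 →
      q * t / (z * q) ^ (m + 2) = 1 / (z * q) * (t / z ^ (m + 1) / q ^ m) := by
    intro q z t hq hz
    field_simp
    ring
  exact key _ _ _ hc hZ
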